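/- Fix ξ₁, ξ₂ ∈ ℂ. Let U ⊆ ℂ be open and let x, y : U → ℂ be differentiable functions satisfying the van der Put–Top PIV system on U, such that y(s) ≠ 0 for all s ∈ U. Then the function f(s) := −i/y(s) satisfies the Painlevé IV equation in the time variable t = −3is/2 with parameters α = 1 − 3ξ₁/2 + 2ξ₂ and β = −ξ₁²/2; precisely, the function F(s) := (2i/3)·f'(s) (the t-derivative of f along t = −3is/2) is differentiable on U and for every s ∈ U, (2i/3)·F'(s) = (1/(2f(s)))·F(s)² + (3/2)f(s)³ + 4t(s)f(s)² + 2(t(s)²−α)f(s) + β/f(s), where t(s) = −3is/2 and i is the imaginary unit. -/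

import Mathlib

/-!
Since `y' = Ry`, the derivative of `f = -i/y` is `i·Ry/y²`, so the `t`-derivative `F` of `f` is a
rational function of `s, x(s), y(s)`. Differentiating it once more along the system, i.e.
substituting `x' = Rx` and `y' = Ry`, turns the Painlevé IV equation into an identity between
rational functions of `s, x, y, ξ₁, ξ₂`, which holds after clearing the powers of `y` and
using `i² = -1`.
-/

open Complex

/-- Right-hand side of the `x`-equation of the van der Put–Top PIV system. -/
noncomputable def vdPT4Rx (ξ₁ ξ₂ : ℂ) (s x y : ℂ) : ℂ :=
  (3 / 2) * (2 * ξ₂ - ξ₁) * (ξ₁ - ξ₂) + (9 * s / 2) * x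
    + (12 * ξ₂ - 9 * ξ₁) * x * y - 9 * x ^ 2 * y ^ 2

/-- Right-hand side of the `y`-equation of the van der Put–Top PIV system. -/
noncomputable def vdPT4Ry (ξ₁ ξ₂ : ℂ) (s x y : ℂ) : ℂ :=
  -3 / 2 + 6 * x * y ^ 3 + ((9 * ξ₁ - 12 * ξ₂) / 2) * y ^ 2 - (9 / 2) * y * s

open Filter Topology

theorem HasDerivAt.const_div {𝕜 : Type*} [NontriviallyNormedField 𝕜] {f : 𝕜 → 𝕜} {f' s : 𝕜}
    (c : 𝕜) (hf : HasDerivAt f f' s) (hs : f s ≠ 0) :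
    HasDerivAt (fun s => c / f s) (-c * f' / f s ^ 2) s := by
  simpa [div_eq_mul_inv, mul_assoc, neg_div] using (hf.inv hs).const_mul c

noncomputable def painleveIVRhs (α β t w w' : ℂ) : ℂ :=
  (1 / (2 * w)) * w' ^ 2 + (3 / 2) * w ^ 3 + 4 * t * w ^ 2 + 2 * (t ^ 2 - α) * w + β / w

noncomputable def vdPT4RyDerivAlong (ξ₁ ξ₂ s x y x' y' : ℂ) : ℂ :=
  6 * x' * y ^ 3 + 18 * x * y ^ 2 * y' + (9 * ξ₁ - 12 * ξ₂) * y * y' - 9 / 2 * (y' * s + y)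

theorem hasDerivAt_vdPT4Ry_comp {ξ₁ ξ₂ : ℂ} {x y : ℂ → ℂ} {x' y' s : ℂ}
    (hx : HasDerivAt x x' s) (hy : HasDerivAt y y' s) :
    HasDerivAt (fun s => vdPT4Ry ξ₁ ξ₂ s (x s) (y s))
      (vdPT4RyDerivAlong ξ₁ ξ₂ s (x s) (y s) x' y') s := by
  have h := ((((hx.const_mul 6).fun_mul (hy.fun_pow 3)).const_add (-3 / 2)).fun_add
    ((hy.fun_pow 2).const_mul ((9 * ξ₁ - 12 * ξ₂) / 2))).fun_sub
    ((hy.const_mul (9 / 2)).fun_mul (hasDerivAt_id' s))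
  exact h.congr_deriv (by unfold vdPT4RyDerivAlong; push_cast; ring)

theorem vdPT4_painleveIV_identity (ξ₁ ξ₂ s x y : ℂ) (hy : y ≠ 0) :
    (2 * I / 3) * ((2 * I / 3) * (I * (vdPT4RyDerivAlong ξ₁ ξ₂ s x y (vdPT4Rx ξ₁ ξ₂ s x y)
        (vdPT4Ry ξ₁ ξ₂ s x y) * y - 2 * vdPT4Ry ξ₁ ξ₂ s x y * vdPT4Ry ξ₁ ξ₂ s x y) / y ^ 3))
      = painleveIVRhs (1 - 3 * ξ₁ / 2 + 2 * ξ₂) (-(ξ₁ ^ 2) / 2) (-3 * I * s / 2) (-I / y)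
          ((2 * I / 3) * (I * vdPT4Ry ξ₁ ξ₂ s x y / y ^ 2)) := by
  simp only [painleveIVRhs, vdPT4RyDerivAlong, vdPT4Rx, vdPT4Ry]
  field_simp
  ring_nf
  simp only [I_sq, I_pow_four]
  ring

theorem hasDerivAt_vdPT4Ry_div_sq {ξ₁ ξ₂ : ℂ} {x y : ℂ → ℂ} {x' y' s : ℂ}
    (hx : HasDerivAt x x' s) (hy : HasDerivAt y y' s) (hs : y s ≠ 0) :
    HasDerivAt (fun s => (2 * I / 3) * (I * vdPT4Ry ξ₁ ξ₂ s (x s) (y s) / y s ^ 2))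
      ((2 * I / 3) * (I * (vdPT4RyDerivAlong ξ₁ ξ₂ s (x s) (y s) x' y' * y s
        - 2 * vdPT4Ry ξ₁ ξ₂ s (x s) (y s) * y') / y s ^ 3)) s := by
  have h := (((hasDerivAt_vdPT4Ry_comp (ξ₁ := ξ₁) (ξ₂ := ξ₂) hx hy).const_mul I).fun_div
    (hy.fun_pow 2) (pow_ne_zero 2 hs)).const_mul (2 * I / 3)
  exact h.congr_deriv (by field_simp; ring)

/-- solutions of the van der Put–Top PIV system give, via
`f = -i/y` and `t = -3is/2`, solutions of the Painlevé IV equation with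
parameters α = 1 - 3ξ₁/2 + 2ξ₂, β = -ξ₁²/2.  Under `t = -3is/2` the
`t`-derivative becomes `(2i/3)·d/ds`. -/
theorem vdPT_solves_PIV
    (ξ₁ ξ₂ : ℂ) (U : Set ℂ) (hU : IsOpen U) (x y : ℂ → ℂ)
    (hreg : ∀ s ∈ U, y s ≠ 0)
    (hx : ∀ s ∈ U, HasDerivAt x (vdPT4Rx ξ₁ ξ₂ s (x s) (y s)) s)
    (hy : ∀ s ∈ U, HasDerivAt y (vdPT4Ry ξ₁ ξ₂ s (x s) (y s)) s) :
    ∀ s ∈ U,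
      DifferentiableAt ℂ
        (fun s' => (2 * I / 3) * deriv (fun s'' => -I / y s'') s') s ∧
      (2 * I / 3) * deriv
          (fun s' => (2 * I / 3) * deriv (fun s'' => -I / y s'') s') s
        = (1 / (2 * (-I / y s)))
              * ((2 * I / 3) * deriv (fun s'' => -I / y s'') s) ^ 2
            + (3 / 2) * (-I / y s) ^ 3
            + 4 * (-3 * I * s / 2) * (-I / y s) ^ 2
            + 2 * ((-3 * I * s / 2) ^ 2 - (1 - 3 * ξ₁ / 2 + 2 * ξ₂)) * (-I / y s)
            + (-(ξ₁ ^ 2) / 2) / (-I / y s) := by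
  have hf : ∀ u ∈ U,
      HasDerivAt (fun s => -I / y s) (I * vdPT4Ry ξ₁ ξ₂ u (x u) (y u) / y u ^ 2) u :=
    fun u hu => by simpa using (hy u hu).const_div (-I) (hreg u hu)
  intro s hs
  have hF_eq : (fun s' => (2 * I / 3) * deriv (fun s'' => -I / y s'') s')
      =ᶠ[𝓝 s] fun s' => (2 * I / 3) * (I * vdPT4Ry ξ₁ ξ₂ s' (x s') (y s') / y s' ^ 2) := by
    filter_upwards [hU.mem_nhds hs] with u hu
    rw [(hf u hu).deriv]
  have hF :=
    (hasDerivAt_vdPT4Ry_div_sq (hx s hs) (hy s hs) (hreg s hs)).congr_of_eventuallyEq hF_eq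
  refine ⟨hF.differentiableAt, ?_⟩
  rw [hF.deriv, (hf s hs).deriv]
  exact vdPT4_painleveIV_identity ξ₁ ξ₂ s (x s) (y s) (hreg s hs)
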